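/- arXiv:1901.01543 — 7 statements merged into one kernel-verified Lean document; each statement's English description precedes it below -/
import Mathlib

section
/- If u(x,y) solves the Liouville equation u_xx + u_yy = K e^u, then for each ε with σ(x,y;−ε) = 1 + 2εx + ε²(x²+y²) ≠ 0, the function u_ε(x,y) = −2 log σ(x,y;−ε) + u((x + ε(x²+y²))/σ(x,y;−ε), y/σ(x,y;−ε)) also solves u_xx + u_yy = K e^u. -/
/-!
In the complex coordinate `z = x + i y` one has `σ(x,y;-ε) = |1 + ε z|²`, and the new argument of
`u` is the Möbius map `g z = z / (1 + ε z)`, with `|g'(z)|² = σ⁻²`. For holomorphic `g` the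
Laplacian transforms as `Δ (u ∘ g) = |g'|² (Δ u) ∘ g`, and `log σ = 2 log |1 + ε z|` is harmonic,
so `Δ u_ε = σ⁻² K e^{u ∘ g} = K e^{u_ε}`.
-/

open Filter Topology InnerProductSpace Complex Laplacian

variable {E G : Type*} [NormedAddCommGroup E] [NormedSpace ℝ E] [NormedAddCommGroup G]
  [NormedSpace ℝ G]

theorem deriv_deriv_comp_eq {f : E → G} {γ γ' : ℝ → E} {t₀ : ℝ} {a : E}
    (hf : ContDiffAt ℝ 2 f (γ t₀)) (hγ : ∀ᶠ t in 𝓝 t₀, HasDerivAt γ (γ' t) t)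
    (hγ' : HasDerivAt γ' a t₀) :
    deriv (deriv (fun t => f (γ t))) t₀
      = fderiv ℝ (fderiv ℝ f) (γ t₀) (γ' t₀) (γ' t₀) + fderiv ℝ f (γ t₀) a := by
  have hγc : ContinuousAt γ t₀ := hγ.self_of_nhds.continuousAt
  have hdf : ∀ᶠ t in 𝓝 t₀, DifferentiableAt ℝ f (γ t) :=
    hγc.eventually ((hf.eventually (by simp)).mono fun _ h => h.differentiableAt (by simp))
  have hfirst : deriv (fun t => f (γ t)) =ᶠ[𝓝 t₀] fun t => fderiv ℝ f (γ t) (γ' t) := by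
    filter_upwards [hγ, hdf] with t hγt hft
    exact (hft.hasFDerivAt.comp_hasDerivAt t hγt).deriv
  have hdf' : DifferentiableAt ℝ (fderiv ℝ f) (γ t₀) :=
    (hf.fderiv_right (m := 1) (by norm_num)).differentiableAt (by simp)
  rw [hfirst.deriv_eq]
  exact ((hdf'.hasFDerivAt.comp_hasDerivAt t₀ hγ.self_of_nhds).clm_apply hγ').deriv

theorem fderiv_fderiv_apply_self_eq_deriv_deriv {f : E → G} {z : E} (hf : ContDiffAt ℝ 2 f z)
    (v : E) :
    fderiv ℝ (fderiv ℝ f) z v v = deriv (deriv (fun t : ℝ => f (z + t • v))) 0 := by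
  have := deriv_deriv_comp_eq (γ := fun t : ℝ => z + t • v) (γ' := fun _ => v) (a := 0)
    (by simpa using hf)
    (Eventually.of_forall fun t => by simpa using ((hasDerivAt_id t).smul_const v).const_add z)
    (hasDerivAt_const 0 v)
  simpa using this.symm

theorem laplacian_eq_fderiv_fderiv_complexPlane (f : ℂ → G) (z : ℂ) :
    Δ f z = fderiv ℝ (fderiv ℝ f) z 1 1 + fderiv ℝ (fderiv ℝ f) z I I := by
  simp [laplacian_eq_iteratedFDeriv_complexPlane, iteratedFDeriv_two_apply]

theorem fderiv_fderiv_add_fderiv_fderiv_mul_I {f : ℂ → G} {w : ℂ} (hf : ContDiffAt ℝ 2 f w)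
    (c : ℂ) :
    fderiv ℝ (fderiv ℝ f) w c c + fderiv ℝ (fderiv ℝ f) w (c * I) (c * I)
      = ‖c‖ ^ 2 • Δ f w := by
  have hsymm := (hf.isSymmSndFDerivAt (by simp)).eq 1 I
  have hcI : c * I = (-c.im) • (1 : ℂ) + c.re • I := by simp [Complex.ext_iff]
  rw [laplacian_eq_fderiv_fderiv_complexPlane, Complex.sq_norm, normSq_apply, hcI]
  set a := c.re
  set b := c.im
  have hc : c = a • (1 : ℂ) + b • I := by simp [a, b]
  rw [hc]
  simp only [map_add, map_smul, add_apply, FunLike.coe_smul, Pi.smul_apply, hsymm]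
  module

theorem deriv_deriv_add_deriv_deriv_eq_laplacian {f : ℂ → G} {x y : ℝ}
    (hf : ContDiffAt ℝ 2 f (x + y * I)) :
    deriv (fun x' : ℝ => deriv (fun x'' : ℝ => f (x'' + y * I)) x') x
      + deriv (fun y' : ℝ => deriv (fun y'' : ℝ => f (x + y'' * I)) y') y
      = Δ f (x + y * I) := by
  have hx := deriv_deriv_comp_eq (γ := fun t : ℝ => (t : ℂ) + y * I) (γ' := fun _ => 1) (a := 0)
    hf
    (Eventually.of_forall fun t => (hasDerivAt_id t).ofReal_comp.add_const _)
    (hasDerivAt_const x 1)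
  have hy := deriv_deriv_comp_eq (γ := fun t : ℝ => (x : ℂ) + t * I) (γ' := fun _ => I) (a := 0)
    hf
    (Eventually.of_forall fun t => by
      simpa using ((hasDerivAt_id t).ofReal_comp.mul_const I).const_add (x : ℂ))
    (hasDerivAt_const y I)
  rw [laplacian_eq_fderiv_fderiv_complexPlane]
  simp only [map_zero, add_zero] at hx hy
  exact congrArg₂ (· + ·) hx hy

theorem laplacian_comp_analyticAt {f : ℂ → G} {g : ℂ → ℂ} {z : ℂ}
    (hf : ContDiffAt ℝ 2 f (g z)) (hg : AnalyticAt ℂ g z) :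
    Δ (f ∘ g) z = ‖deriv g z‖ ^ 2 • Δ f (g z) := by
  have hfg : ContDiffAt ℝ 2 (f ∘ g) z := hf.comp z (hg.contDiffAt.restrict_scalars ℝ)
  have hline : ∀ v : ℂ, fderiv ℝ (fderiv ℝ (f ∘ g)) z v v
      = fderiv ℝ (fderiv ℝ f) (g z) (deriv g z * v) (deriv g z * v)
        + fderiv ℝ f (g z) (deriv (deriv g) z * v * v) := by
    intro v
    have hmove : ∀ t : ℝ, HasDerivAt (fun s : ℝ => z + s • v) v t := fun t => by
      simpa using ((hasDerivAt_id t).smul_const v).const_add z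
    have hγ : ∀ᶠ t in 𝓝 (0 : ℝ), HasDerivAt (fun t : ℝ => g (z + t • v))
        (deriv g (z + t • v) * v) t := by
      have hcont : ContinuousAt (fun s : ℝ => z + s • v) 0 := (hmove 0).continuousAt
      have := hcont.eventually (by simpa using hg.eventually_analyticAt)
      filter_upwards [this] with t ht
      exact ht.differentiableAt.hasDerivAt.comp t (hmove t)
    have hγ' : HasDerivAt (fun t : ℝ => deriv g (z + t • v) * v)
        (deriv (deriv g) z * v * v) 0 := by
      have := (hg.deriv.differentiableAt.hasDerivAt.comp_of_eq (0 : ℝ) (hmove 0) (by simp))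
      exact this.mul_const v
    rw [fderiv_fderiv_apply_self_eq_deriv_deriv hfg v]
    simpa using deriv_deriv_comp_eq (f := f) (by simpa using hf) hγ hγ'
  rw [laplacian_eq_fderiv_fderiv_complexPlane, hline, hline, add_add_add_comm, ← map_add,
    mul_one, mul_one, mul_one, fderiv_fderiv_add_fderiv_fderiv_mul_I hf, mul_assoc, I_mul_I]
  simp

theorem hasDerivAt_div_one_add_mul {c z : ℂ} (h : 1 + c * z ≠ 0) :
    HasDerivAt (fun w => w / (1 + c * w)) (1 / (1 + c * z) ^ 2) z := by
  refine ((hasDerivAt_id' z).div (((hasDerivAt_id' z).const_mul c).const_add 1) h).congr_deriv ?_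
  ring

theorem analyticAt_div_one_add_mul {c z : ℂ} (h : 1 + c * z ≠ 0) :
    AnalyticAt ℂ (fun w => w / (1 + c * w)) z :=
  analyticAt_id.div (analyticAt_const.add (analyticAt_const.mul analyticAt_id)) h

theorem harmonicAt_log_normSq_one_add_mul {c z : ℂ} (h : 1 + c * z ≠ 0) :
    HarmonicAt (fun w => Real.log (normSq (1 + c * w))) z := by
  have hlog : (fun w => Real.log (normSq (1 + c * w)))
      = (2 : ℝ) • fun w => Real.log ‖1 + c * w‖ := by
    funext w
    simp [← Complex.sq_norm, Real.log_pow]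
  rw [hlog]
  exact ((analyticAt_const.add (analyticAt_const.mul analyticAt_id)).harmonicAt_log_norm
    h).const_smul

theorem exp_neg_two_mul_log_normSq {w : ℂ} (hw : w ≠ 0) :
    Real.exp (-2 * Real.log (normSq w)) = ‖1 / w ^ 2‖ ^ 2 := by
  have hN : 0 < normSq w := normSq_pos.2 hw
  rw [← Real.log_rpow hN, Real.exp_log (by positivity), Real.rpow_neg hN.le, norm_div, norm_pow,
    ← normSq_eq_norm_sq, norm_one, one_div, inv_pow]
  norm_cast

theorem normSq_one_add_ofReal_mul (ε a b : ℝ) :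
    normSq (1 + ε * (a + b * I)) = 1 + 2 * ε * a + ε ^ 2 * (a ^ 2 + b ^ 2) := by
  simp [normSq_apply]
  ring

theorem re_div_one_add_ofReal_mul (ε a b : ℝ) :
    ((a + b * I) / (1 + ε * (a + b * I))).re
      = (a + ε * (a ^ 2 + b ^ 2)) / (1 + 2 * ε * a + ε ^ 2 * (a ^ 2 + b ^ 2)) := by
  rw [div_re, normSq_one_add_ofReal_mul, ← add_div]
  congr 1
  simp
  ring

theorem im_div_one_add_ofReal_mul (ε a b : ℝ) :
    ((a + b * I) / (1 + ε * (a + b * I))).im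
      = b / (1 + 2 * ε * a + ε ^ 2 * (a ^ 2 + b ^ 2)) := by
  rw [div_im, normSq_one_add_ofReal_mul, ← sub_div]
  congr 1
  simp
  ring

/-- Conformal symmetry of the elliptic Liouville equation. -/
theorem stmt_3 (K ε : ℝ) (u : ℝ → ℝ → ℝ)
    (hC : ContDiff ℝ 2 (fun p : ℝ × ℝ => u p.1 p.2))
    (hu : ∀ x y : ℝ,
      deriv (fun x' => deriv (fun x'' => u x'' y) x') x
      + deriv (fun y' => deriv (fun y'' => u x y'') y') y
      = K * Real.exp (u x y)) :
    ∀ x y : ℝ, 1 + 2*ε*x + ε^2*(x^2+y^2) ≠ 0 →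
      let σm : ℝ → ℝ → ℝ := fun x y => 1 + 2*ε*x + ε^2*(x^2+y^2)
      let v : ℝ → ℝ → ℝ := fun x y =>
        -2 * Real.log (σm x y)
          + u ((x + ε*(x^2+y^2)) / σm x y) (y / σm x y)
      deriv (fun x' => deriv (fun x'' => v x'' y) x') x
      + deriv (fun y' => deriv (fun y'' => v x y'') y') y
      = K * Real.exp (v x y) := by
  intro x y hσ σm v
  set U : ℂ → ℝ := fun w => u w.re w.im
  set g : ℂ → ℂ := fun w => w / (1 + ε * w)
  set L : ℂ → ℝ := (-2 : ℝ) • fun w => Real.log (normSq (1 + ε * w))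
  have hU : ContDiff ℝ 2 U := hC.comp equivRealProdCLM.contDiff
  have hΔU : ∀ w, Δ U w = K * Real.exp (U w) := by
    intro w
    rw [← re_add_im w, ← deriv_deriv_add_deriv_deriv_eq_laplacian hU.contDiffAt]
    simpa [U] using hu w.re w.im
  have hv : ∀ a b : ℝ, v a b = (L + U ∘ g) (a + b * I) := by
    intro a b
    simp only [v, σm, L, U, g, Pi.add_apply, Pi.smul_apply, smul_eq_mul, Function.comp_apply,
      normSq_one_add_ofReal_mul, re_div_one_add_ofReal_mul, im_div_one_add_ofReal_mul]
  set z : ℂ := x + y * I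
  have hz : 1 + (ε : ℂ) * z ≠ 0 := by
    rwa [Ne, ← normSq_eq_zero, normSq_one_add_ofReal_mul]
  have hL : HarmonicAt L z := (harmonicAt_log_normSq_one_add_mul hz).const_smul
  have hg : AnalyticAt ℂ g z := analyticAt_div_one_add_mul hz
  have hUg : ContDiffAt ℝ 2 (U ∘ g) z :=
    hU.contDiffAt.comp z (hg.contDiffAt.restrict_scalars ℝ)
  have hexpL : Real.exp (L z) = ‖deriv g z‖ ^ 2 := by
    rw [(hasDerivAt_div_one_add_mul hz).deriv]
    exact exp_neg_two_mul_log_normSq hz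
  simp only [hv]
  rw [deriv_deriv_add_deriv_deriv_eq_laplacian (f := L + U ∘ g) (hL.1.add hUg),
    hL.1.laplacian_add hUg, hL.2.self_of_nhds, laplacian_comp_analyticAt hU.contDiffAt hg, hΔU,
    Pi.add_apply, Real.exp_add, hexpL]
  simp
  ring
end

section
/- For a ≠ 0, b real, the curve defined implicitly by a y² + (2b/3)xy + (1 + b²/(9a))x² + C₁(y + (b/(3a))x) + C₂ = 0 satisfies, wherever y is a C² function of x, the ODE x y'' = a y'³ + b y'² + (1 + b²/(3a)) y' + b(9a+b²)/(27a²). -/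
/-!
Since `a y² + (2b/3) x y + (b²/(9a)) x² = a (y + b x/(3a))²`, the substitution `u = y + b x/(3a)`
turns the curve into `a u² + C₁ u + x² + C₂ = 0`. Differentiating this twice gives
`(2a u + C₁) u' = -2x` and `(2a u + C₁) u'' = -2(a u'² + 1)`, so eliminating `2a u + C₁` yields
`x u'' = u' (a u'² + 1)`. Writing `u' = y' + b/(3a)` and `u'' = y''` expands this to the stated ODE.
-/

open Filter Topology

theorem HasDerivAt.eq_zero_of_eqOn_const {s : Set ℝ} (hs : IsOpen s) {f : ℝ → ℝ} {c d x : ℝ}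
    (hf : Set.EqOn f (fun _ => c) s) (hx : x ∈ s) (hd : HasDerivAt f d x) : d = 0 :=
  hd.unique ((hasDerivAt_const x c).congr_of_eventuallyEq
    (eventuallyEq_of_mem (hs.mem_nhds hx) hf))

theorem mul_deriv_deriv_eq_of_conic {a C₁ C₂ : ℝ} {s : Set ℝ} (hs : IsOpen s) {u : ℝ → ℝ}
    (hu : ContDiffOn ℝ 2 u s) (hconic : ∀ x ∈ s, a * u x ^ 2 + C₁ * u x + x ^ 2 + C₂ = 0)
    {x : ℝ} (hx : x ∈ s) :
    x * deriv (deriv u) x = deriv u x * (a * deriv u x ^ 2 + 1) := by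
  have hdu : ∀ t ∈ s, HasDerivAt u (deriv u t) t := fun t ht =>
    ((hu.differentiableOn (by norm_num)).differentiableAt (hs.mem_nhds ht)).hasDerivAt
  have hddu : HasDerivAt (deriv u) (deriv (deriv u) x) x :=
    (((hu.deriv_of_isOpen hs (m := 1) (by norm_num)).differentiableOn one_ne_zero)
      |>.differentiableAt (hs.mem_nhds hx)).hasDerivAt
  have first : ∀ t ∈ s, (2 * a * u t + C₁) * deriv u t + 2 * t = 0 := fun t ht =>
    HasDerivAt.eq_zero_of_eqOn_const hs hconic ht <|
      ((((hdu t ht).pow 2).const_mul a).add (((hdu t ht).const_mul C₁))).add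
        (hasDerivAt_pow 2 t) |>.add_const C₂ |>.congr_deriv (by ring)
  have second : (2 * a * u x + C₁) * deriv (deriv u) x + 2 * a * deriv u x ^ 2 + 2 = 0 :=
    HasDerivAt.eq_zero_of_eqOn_const hs first hx <|
      (((((hdu x hx).const_mul (2 * a)).add_const C₁).mul hddu).add
        ((hasDerivAt_id x).const_mul 2)).congr_deriv (by ring)
  linear_combination (deriv (deriv u) x / 2) * first x hx - (deriv u x / 2) * second

/-- The implicit conic family solves the linearizable second-order ODE. -/
theorem stmt_5 (a b C₁ C₂ : ℝ) (ha : a ≠ 0) (s : Set ℝ) (hs : IsOpen s)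
    (y : ℝ → ℝ) (hy : ContDiffOn ℝ 2 y s)
    (hcurve : ∀ x ∈ s, a * (y x)^2 + (2*b/3)*x*(y x) + (1 + b^2/(9*a))*x^2
      + C₁*(y x + (b/(3*a))*x) + C₂ = 0) :
    ∀ x ∈ s, x * deriv (deriv y) x
      = a * (deriv y x)^3 + b * (deriv y x)^2 + (1 + b^2/(3*a)) * deriv y x
        + b*(9*a + b^2)/(27*a^2) := by
  intro x hx
  set k := b / (3 * a)
  have hu : ContDiffOn ℝ 2 (fun t => y t + k * t) s := hy.add (by fun_prop)
  have hconic : ∀ t ∈ s, a * (y t + k * t) ^ 2 + C₁ * (y t + k * t) + t ^ 2 + C₂ = 0 := by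
    intro t ht
    rw [← hcurve t ht]
    simp only [k]
    field_simp
    ring
  have hderiv : deriv (fun t => y t + k * t) =ᶠ[𝓝 x] fun t => deriv y t + k := by
    filter_upwards [hs.mem_nhds hx] with t ht
    have hyt := ((hy.differentiableOn (by norm_num)).differentiableAt (hs.mem_nhds ht)).hasDerivAt
    exact (hyt.add ((hasDerivAt_id t).const_mul k)).deriv.trans (by simp)
  have hode := mul_deriv_deriv_eq_of_conic hs hu hconic hx
  rw [hderiv.eq_of_nhds, hderiv.deriv_eq, deriv_add_const] at hode
  rw [hode]
  simp only [k]
  field_simp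
  ring
end

section
/- If y(x) > 0 satisfies the second member of the Riccati chain y'' + 3yy' + y³ = 0 on an interval where y' + y² ≠ 0, then s = x/y − x²/2 as a function of r = x − 1/y satisfies d²s/dr² = 0; equivalently, d²s/dr² = −y³(y'' + 3yy' + y³)/(y² + y')³. -/
/-!
Along the curve, `dr/dx = (y² + y')/y²` and `ds/dx = (y - x y')/y² - x`, so
`ds/dr = y/(y² + y') - x`. Differentiating once more, the Riccati expression appears in the
numerator: `d/dx (ds/dr) = -y (y'' + 3 y y' + y³)/(y² + y')²`, hence
`d²s/dr² = -y³ (y'' + 3 y y' + y³)/(y² + y')³`, which vanishes on solutions.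
-/

open Filter Topology

lemma hasDerivAt_sub_one_div {y : ℝ → ℝ} {y' x : ℝ} (hy : HasDerivAt y y' x)
    (hx : y x ≠ 0) :
    HasDerivAt (fun t => t - 1 / y t) ((y x ^ 2 + y') / y x ^ 2) x := by
  refine ((hasDerivAt_id' x).sub ((hasDerivAt_const x (1 : ℝ)).div hy hx)).congr_deriv ?_
  field_simp
  ring

lemma hasDerivAt_div_sub_sq_div_two {y : ℝ → ℝ} {y' x : ℝ} (hy : HasDerivAt y y' x)
    (hx : y x ≠ 0) :
    HasDerivAt (fun t => t / y t - t ^ 2 / 2) ((y x - x * y') / y x ^ 2 - x) x := by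
  refine (((hasDerivAt_id' x).div hy hx).sub ((hasDerivAt_pow 2 x).div_const 2)).congr_deriv ?_
  field_simp
  ring

lemma hasDerivAt_div_sq_add_sub {y y' : ℝ → ℝ} {y'' x : ℝ} (hy : HasDerivAt y (y' x) x)
    (hy' : HasDerivAt y' y'' x) (hD : y x ^ 2 + y' x ≠ 0) :
    HasDerivAt (fun t => y t / (y t ^ 2 + y' t) - t)
      (-y x * (y'' + 3 * y x * y' x + y x ^ 3) / (y x ^ 2 + y' x) ^ 2) x := by
  have hden : HasDerivAt (fun t => y t ^ 2 + y' t) (2 * y x * y' x + y'') x :=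
    ((hy.pow 2).add hy').congr_deriv (by ring)
  refine ((hy.div hden hD).sub (hasDerivAt_id' x)).congr_deriv ?_
  field_simp
  ring

theorem deriv_dsdr_div_drdx_eq_neg_mul_riccati {s : Set ℝ} (hs : IsOpen s) {y : ℝ → ℝ}
    (hy : ContDiffOn ℝ 2 y s) (hne : ∀ x ∈ s, y x ≠ 0)
    (hreg : ∀ x ∈ s, deriv y x + y x ^ 2 ≠ 0) {x : ℝ} (hx : x ∈ s) :
    deriv (fun t => deriv (fun t' => t' / y t' - t' ^ 2 / 2) t
        / deriv (fun t' => t' - 1 / y t') t) x / deriv (fun t' => t' - 1 / y t') x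
      = -y x ^ 3 * (deriv (deriv y) x + 3 * y x * deriv y x + y x ^ 3)
          / (y x ^ 2 + deriv y x) ^ 3 := by
  have hy1 : ∀ t ∈ s, HasDerivAt y (deriv y t) t := fun t ht =>
    ((hy.differentiableOn (by norm_num)).differentiableAt (hs.mem_nhds ht)).hasDerivAt
  have hy2 : ∀ t ∈ s, HasDerivAt (deriv y) (deriv (deriv y) t) t := fun t ht =>
    (((hy.deriv_of_isOpen (m := 1) hs (by norm_num)).differentiableOn one_ne_zero).differentiableAt
      (hs.mem_nhds ht)).hasDerivAt
  have hD : ∀ t ∈ s, y t ^ 2 + deriv y t ≠ 0 := fun t ht => by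
    rw [add_comm]; exact hreg t ht
  have hslope : (fun t => deriv (fun t' => t' / y t' - t' ^ 2 / 2) t
      / deriv (fun t' => t' - 1 / y t') t)
        =ᶠ[𝓝 x] fun t => y t / (y t ^ 2 + deriv y t) - t := by
    filter_upwards [hs.mem_nhds hx] with t ht
    rw [(hasDerivAt_div_sub_sq_div_two (hy1 t ht) (hne t ht)).deriv,
      (hasDerivAt_sub_one_div (hy1 t ht) (hne t ht)).deriv]
    have hy0 := hne t ht
    have hD0 := hD t ht
    field_simp
    ring
  rw [hslope.deriv_eq, (hasDerivAt_div_sq_add_sub (hy1 x hx) (hy2 x hx) (hD x hx)).deriv,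
    (hasDerivAt_sub_one_div (hy1 x hx) (hne x hx)).deriv]
  have hy0 := hne x hx
  have hD0 := hD x hx
  field_simp

/-- Linearization of the second member of the Riccati chain:
s = x/y − x²/2 as a function of r = x − 1/y satisfies d²s/dr² = 0. -/
theorem stmt_6 (s : Set ℝ) (hs : IsOpen s) (y : ℝ → ℝ)
    (hy : ContDiffOn ℝ 2 y s)
    (hne : ∀ x ∈ s, y x ≠ 0)
    (hreg : ∀ x ∈ s, deriv y x + (y x)^2 ≠ 0)
    (hode : ∀ x ∈ s, deriv (deriv y) x + 3 * y x * deriv y x + (y x)^3 = 0) :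
    ∀ x ∈ s,
      deriv (fun t => deriv (fun t' => t' / y t' - t'^2/2) t
          / deriv (fun t' => t' - 1 / y t') t) x
        / deriv (fun t' => t' - 1 / y t') x = 0 := by
  intro x hx
  rw [deriv_dsdr_div_drdx_eq_neg_mul_riccati hs hy hne hreg hx, hode x hx, mul_zero, zero_div]
end

section
/- For real constants α, K, the Ermakov–Pinney equation y'' − α²y = K y⁻³ is solved by y(x) = √(A e^{2αx} + B + C e^{−2αx}) on any interval where A e^{2αx} + B + C e^{−2αx} > 0, provided (4AC − B²)α² = K. -/
/-!
With `u = A e^{2αx} + B + C e^{-2αx}` one has `u'' = 4α²(u - B)` and, since `e^{2αx} e^{-2αx} = 1`,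
`u'² = 4α²((u - B)² - 4AC)`. For `y = √u` the general formula `y'' = (2 u u'' - u'²) / (4 y³)`
then gives `y'' - α² y = 4α²(4AC - B²) / (4 y³) = K / y³`.
-/

open Real Filter Topology

theorem hasDerivAt_deriv_sqrt {u u' : ℝ → ℝ} {u'' x : ℝ}
    (hu : ∀ᶠ t in 𝓝 x, HasDerivAt u (u' t) t ∧ 0 < u t) (hu' : HasDerivAt u' u'' x) :
    HasDerivAt (deriv fun t => √(u t))
      ((2 * u x * u'' - u' x ^ 2) / (4 * √(u x) ^ 3)) x := by
  have hux : 0 < u x := hu.self_of_nhds.2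
  have hderiv : (deriv fun t => √(u t)) =ᶠ[𝓝 x] fun t => u' t / (2 * √(u t)) := by
    filter_upwards [hu] with t ⟨ht, hpos⟩
    exact (ht.sqrt hpos.ne').deriv
  have hsqrt : HasDerivAt (fun t => 2 * √(u t)) (2 * (u' x / (2 * √(u x)))) x :=
    (hu.self_of_nhds.1.sqrt hux.ne').const_mul 2
  refine ((hu'.div hsqrt (by positivity)).congr_of_eventuallyEq hderiv).congr_deriv ?_
  have hsq : √(u x) ^ 2 = u x := sq_sqrt hux.le
  have hsqrt_pos : 0 < √(u x) := sqrt_pos.2 hux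
  field_simp
  linear_combination (8 * u'') * hsq

noncomputable def expQuad (α A B C t : ℝ) : ℝ := A * exp (2 * α * t) + B + C * exp (-2 * α * t)

theorem hasDerivAt_expQuad (α A B C t : ℝ) :
    HasDerivAt (expQuad α A B C) (2 * α * expQuad α A 0 (-C) t) t := by
  have hlin (c : ℝ) : HasDerivAt (fun s => c * s) c t := by
    simpa using (hasDerivAt_id t).const_mul c
  have := ((((hlin (2 * α)).exp).const_mul A).add_const B).add (((hlin (-2 * α)).exp).const_mul C)
  exact this.congr_deriv (by simp only [expQuad]; ring)

theorem expQuad_zero_neg_sq (α A B C t : ℝ) :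
    expQuad α A 0 (-C) t ^ 2 = (expQuad α A B C t - B) ^ 2 - 4 * A * C := by
  have h : exp (2 * α * t) * exp (-2 * α * t) = 1 := by rw [← exp_add]; simp
  simp only [expQuad]
  linear_combination (-4 * A * C) * h

theorem expQuad_zero (α A B C t : ℝ) : expQuad α A 0 C t = expQuad α A B C t - B := by
  simp only [expQuad]; ring

/-- Explicit solution of the Ermakov–Pinney equation y'' − α²y = K y⁻³. -/
theorem stmt_8 (α K A B C : ℝ) (hK : (4*A*C - B^2) * α^2 = K)
    (s : Set ℝ) (hs : IsOpen s)
    (hpos : ∀ x ∈ s, A * Real.exp (2*α*x) + B + C * Real.exp (-2*α*x) > 0) :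
    ∀ x ∈ s,
      deriv (deriv (fun t =>
          Real.sqrt (A * Real.exp (2*α*t) + B + C * Real.exp (-2*α*t)))) x
        - α^2 * Real.sqrt (A * Real.exp (2*α*x) + B + C * Real.exp (-2*α*x))
      = K / (Real.sqrt (A * Real.exp (2*α*x) + B + C * Real.exp (-2*α*x)))^3 := by
  intro x hx
  change deriv (deriv fun t => √(expQuad α A B C t)) x - α ^ 2 * √(expQuad α A B C x)
    = K / √(expQuad α A B C x) ^ 3
  have hu : ∀ᶠ t in 𝓝 x, HasDerivAt (expQuad α A B C) (2 * α * expQuad α A 0 (-C) t) t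
      ∧ 0 < expQuad α A B C t := by
    filter_upwards [hs.mem_nhds hx] with t ht
    exact ⟨hasDerivAt_expQuad α A B C t, hpos t ht⟩
  have hu' := (hasDerivAt_expQuad α A 0 (-C) x).const_mul (2 * α)
  rw [(hasDerivAt_deriv_sqrt hu hu').deriv, neg_neg, expQuad_zero α A B C,
    mul_pow, expQuad_zero_neg_sq α A B C]
  have hux : 0 < expQuad α A B C x := hpos x hx
  have hsq : √(expQuad α A B C x) ^ 2 = expQuad α A B C x := sq_sqrt hux.le
  have hsqrt_pos : 0 < √(expQuad α A B C x) := sqrt_pos.2 hux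
  field_simp
  linear_combination (-4 * α ^ 2 * (√(expQuad α A B C x) ^ 2 + expQuad α A B C x)) * hsq + 4 * hK
end

section
/- For t > 0, x > 0, y > 0, the function K(t,x) = (π t y)^{-1/2} exp(−(x+y)/t) cosh(2√(xy)/t) satisfies the degenerate diffusion equation K_t = x K_xx + (1/2) K_x. -/
/-!
In the variable `z = √x` the operator `x ∂ₓ² + ½ ∂ₓ` becomes `¼ ∂_z²`. Writing `cosh` as a sum of
two exponentials and completing the squares `x + y ∓ 2√(xy) = (√x ∓ √y)²` exhibits the kernel as
`(2√y)⁻¹ (G(t, √x - √y) + G(t, √x + √y))`, where `G` is the heat kernel of `∂ₜ = ¼ ∂_z²`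
(the fundamental solution at `√y` plus its mirror image at `-√y`), and each term solves the
equation.
-/

open Real Filter Topology

/-- The heat kernel of `u_t = u_zz / 4`. -/
noncomputable def heatKernel (t z : ℝ) : ℝ := (π * t) ^ (-(1:ℝ)/2) * exp (-z ^ 2 / t)

noncomputable def heatKernelDeriv (t z : ℝ) : ℝ := -2 * z / t * heatKernel t z

noncomputable def heatKernelDeriv2 (t z : ℝ) : ℝ := (4 * z ^ 2 / t ^ 2 - 2 / t) * heatKernel t z

lemma hasDerivAt_heatKernel (t z : ℝ) :
    HasDerivAt (heatKernel t) (heatKernelDeriv t z) z := by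
  have h : HasDerivAt (fun z : ℝ => -z ^ 2 / t) (-2 * z / t) z :=
    ((hasDerivAt_pow 2 z).neg.div_const t).congr_deriv (by ring)
  exact (h.exp.const_mul _).congr_deriv (by rw [heatKernelDeriv, heatKernel]; ring)

lemma hasDerivAt_heatKernelDeriv (t z : ℝ) :
    HasDerivAt (heatKernelDeriv t) (heatKernelDeriv2 t z) z := by
  have h := ((hasDerivAt_id' z).const_mul (-2 / t)).mul (hasDerivAt_heatKernel t z)
  refine (h.congr_deriv ?_).congr_of_eventuallyEq (.of_forall fun w => ?_)
  · rw [heatKernelDeriv2, heatKernelDeriv]; ring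
  · simp only [heatKernelDeriv, Pi.mul_apply]; ring

lemma hasDerivAt_heatKernel_time {t : ℝ} (ht : 0 < t) (z : ℝ) :
    HasDerivAt (fun s => heatKernel s z) (heatKernelDeriv2 t z / 4) t := by
  have hπt : π * t ≠ 0 := by positivity
  have hpow := ((hasDerivAt_id' t).const_mul π).rpow_const (p := -(1:ℝ)/2) (Or.inl hπt)
  have hexp : HasDerivAt (fun s : ℝ => -z ^ 2 / s) (z ^ 2 / t ^ 2) t :=
    ((hasDerivAt_inv ht.ne').const_mul (-z ^ 2)).congr_deriv (by ring)
  refine (hpow.mul hexp.exp).congr_deriv ?_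
  rw [rpow_sub_one hπt, heatKernelDeriv2, heatKernel]
  field_simp
  ring

lemma hasDerivAt_const_mul_translates_add {f f' : ℝ → ℝ} (hf : ∀ z, HasDerivAt f (f' z) z)
    (c a z : ℝ) :
    HasDerivAt (fun z => c * (f (z - a) + f (z + a))) (c * (f' (z - a) + f' (z + a))) z :=
  (((hf _).comp_sub_const z a).add ((hf _).comp_add_const z a)).const_mul c

lemma mul_deriv_deriv_comp_sqrt_add_half_deriv {u u' : ℝ → ℝ} {u'' x : ℝ} (hx : 0 < x)
    (hu : ∀ z, 0 < z → HasDerivAt u (u' z) z) (hu' : HasDerivAt u' u'' (√x)) :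
    x * deriv (deriv fun w => u √w) x + 1 / 2 * deriv (fun w => u √w) x = u'' / 4 := by
  have hv : ∀ w, 0 < w → HasDerivAt (fun w => u √w) (u' √w / (2 * √w)) w := fun w hw =>
    ((hu _ (sqrt_pos.2 hw)).comp w (hasDerivAt_sqrt hw.ne')).congr_deriv (by field_simp)
  have hdv : deriv (fun w => u √w) =ᶠ[𝓝 x] fun w => u' √w / (2 * √w) :=
    (eventually_gt_nhds hx).mono fun w hw => (hv w hw).deriv
  have hsqrt := hasDerivAt_sqrt hx.ne'
  have hs : 0 < √x := sqrt_pos.2 hx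
  have hdv' : HasDerivAt (fun w => u' √w / (2 * √w))
      ((u'' * (1 / (2 * √x)) * (2 * √x) - u' √x * (2 * (1 / (2 * √x)))) / (2 * √x) ^ 2) x :=
    (hu'.comp x hsqrt).div (hsqrt.const_mul 2) (by positivity)
  rw [hdv.deriv_eq, hdv'.deriv, (hv x hx).deriv]
  have hx' : x = √x ^ 2 := (sq_sqrt hx.le).symm
  set s := √x
  rw [hx']
  field_simp
  ring

lemma rpow_mul_exp_mul_cosh_eq_heatKernel {t x y : ℝ} (ht : 0 < t) (hx : 0 ≤ x) (hy : 0 < y) :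
    (π * t * y) ^ (-(1:ℝ)/2) * exp (-(x + y) / t) * cosh (2 * √(x * y) / t)
      = y ^ (-(1:ℝ)/2) / 2 * (heatKernel t (√x - √y) + heatKernel t (√x + √y)) := by
  have hminus : -(√x - √y) ^ 2 / t = -(x + y) / t + 2 * √(x * y) / t := by
    rw [sub_sq, sq_sqrt hx, sq_sqrt hy.le, sqrt_mul hx]; ring
  have hplus : -(√x + √y) ^ 2 / t = -(x + y) / t + -(2 * √(x * y) / t) := by
    rw [add_sq, sq_sqrt hx, sq_sqrt hy.le, sqrt_mul hx]; ring
  rw [mul_rpow (by positivity) hy.le, cosh_eq, heatKernel, heatKernel, hminus, hplus,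
    exp_add, exp_add]
  ring

/-- The fundamental-solution kernel for u_t = x u_xx + (1/2) u_x. -/
theorem stmt_12 (y : ℝ) (hy : 0 < y) :
    ∀ t x : ℝ, 0 < t → 0 < x →
      let Kf : ℝ → ℝ → ℝ := fun t x =>
        (Real.pi * t * y) ^ (-(1:ℝ)/2) * Real.exp (-(x+y)/t)
          * Real.cosh (2 * Real.sqrt (x*y) / t)
      deriv (fun t' => Kf t' x) t
        = x * deriv (fun x' => deriv (fun x'' => Kf t x'') x') x
          + (1/2) * deriv (fun x' => Kf t x') x := by
  intro t x ht hx Kf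
  set c := y ^ (-(1:ℝ)/2) / 2
  have htime : HasDerivAt (fun s => Kf s x)
      (c * (heatKernelDeriv2 t (√x - √y) / 4 + heatKernelDeriv2 t (√x + √y) / 4)) t :=
    (((hasDerivAt_heatKernel_time ht _).add (hasDerivAt_heatKernel_time ht _)).const_mul c)
      |>.congr_of_eventuallyEq <| (eventually_gt_nhds ht).mono fun s hs =>
        rpow_mul_exp_mul_cosh_eq_heatKernel hs hx.le hy
  have hspace : Kf t =ᶠ[𝓝 x] fun w => c * (heatKernel t (√w - √y) + heatKernel t (√w + √y)) :=
    (eventually_gt_nhds hx).mono fun w hw => rpow_mul_exp_mul_cosh_eq_heatKernel ht hw.le hy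
  rw [htime.deriv, hspace.deriv.deriv_eq, hspace.deriv_eq,
    mul_deriv_deriv_comp_sqrt_add_half_deriv hx
      (fun z _ => hasDerivAt_const_mul_translates_add (hasDerivAt_heatKernel t) c √y z)
      (hasDerivAt_const_mul_translates_add (hasDerivAt_heatKernelDeriv t) c √y √x)]
  ring
end

section
/- For t > 0, x > 0, y > 0, the function K(t,x) = (π t x)^{-1/2} exp(−(x+y)/t) sinh(2√(xy)/t) satisfies K_t = x K_xx + (3/2) K_x. -/
/-!
Since `-(x+y)/t ± 2√(xy)/t = -(√x ∓ √y)²/t`, the kernel is half the difference of the two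
Gaussian kernels `G_c(t,x) = (π t x)^(-1/2) exp(-(√x - c)²/t)` with `c = ±√y`. In the variable
`r = √x` the operator `x ∂ₓ² + (3/2) ∂ₓ` is a quarter of the radial Laplacian of `ℝ³`, and
`r G_c` is the heat kernel of `∂ₜ = (1/4) ∂ᵣ²`; so each `G_c` solves the equation, and by
linearity so does the kernel.
-/

open Real Filter Topology

/-- `u` is a classical solution of `u_t = x u_xx + b u_x` at `(t, x)`. -/
def SolvesDriftDiffusionAt (b : ℝ) (u : ℝ → ℝ → ℝ) (t x : ℝ) : Prop :=
  ∃ (ux : ℝ → ℝ) (ut uxx : ℝ), HasDerivAt (u · x) ut t ∧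
    (∀ᶠ x' in 𝓝 x, HasDerivAt (u t) (ux x') x') ∧ HasDerivAt ux uxx x ∧
    ut = x * uxx + b * ux x

namespace SolvesDriftDiffusionAt

variable {b t x : ℝ} {u v : ℝ → ℝ → ℝ}

theorem sub (hu : SolvesDriftDiffusionAt b u t x) (hv : SolvesDriftDiffusionAt b v t x) :
    SolvesDriftDiffusionAt b (fun t x => u t x - v t x) t x := by
  obtain ⟨ux, ut, uxx, hut, hux, huxx, hu⟩ := hu
  obtain ⟨vx, vt, vxx, hvt, hvx, hvxx, hv⟩ := hv
  refine ⟨fun x' => ux x' - vx x', ut - vt, uxx - vxx, hut.sub hvt,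
    (hux.and hvx).mono fun _ h => h.1.sub h.2, huxx.sub hvxx, ?_⟩
  rw [hu, hv]
  ring

theorem div_const (hu : SolvesDriftDiffusionAt b u t x) (c : ℝ) :
    SolvesDriftDiffusionAt b (fun t x => u t x / c) t x := by
  obtain ⟨ux, ut, uxx, hut, hux, huxx, hu⟩ := hu
  refine ⟨fun x' => ux x' / c, ut / c, uxx / c, hut.div_const c,
    hux.mono fun _ h => h.div_const c, huxx.div_const c, ?_⟩
  rw [hu]
  ring

theorem deriv_eq (hu : SolvesDriftDiffusionAt b u t x) :
    deriv (fun t' => u t' x) t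
      = x * deriv (fun x' => deriv (fun x'' => u t x'') x') x
        + b * deriv (fun x' => u t x') x := by
  obtain ⟨ux, ut, uxx, hut, hux, huxx, hu⟩ := hu
  have hderiv : (fun x' => deriv (u t) x') =ᶠ[𝓝 x] ux := hux.mono fun _ h => h.deriv
  rw [hut.deriv, hderiv.deriv_eq, huxx.deriv, hux.self_of_nhds.deriv, hu]

end SolvesDriftDiffusionAt

theorem HasDerivAt.rpow_neg_half {f : ℝ → ℝ} {f' a : ℝ} (hf : HasDerivAt f f' a)
    (ha : 0 < f a) :
    HasDerivAt (fun s => f s ^ (-(1:ℝ)/2)) (-(f a ^ (-(1:ℝ)/2)) * f' / (2 * f a)) a := by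
  refine (hf.rpow_const (Or.inl ha.ne')).congr_deriv ?_
  rw [rpow_sub_one ha.ne']
  field_simp

noncomputable def gaussKernel (c t x : ℝ) : ℝ :=
  (π * t * x) ^ (-(1:ℝ)/2) * exp (-(√x - c) ^ 2 / t)

noncomputable def gaussKernelLogDerivX (c t x : ℝ) : ℝ :=
  -1 / (2 * x) - 1 / t + c / (t * √x)

theorem sinhKernel_eq_gaussKernel_sub {y : ℝ} (hy : 0 ≤ y) (t x : ℝ) :
    (π * t * x) ^ (-(1:ℝ)/2) * exp (-(x + y) / t) * sinh (2 * √(x * y) / t)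
      = (gaussKernel (√y) t x - gaussKernel (-√y) t x) / 2 := by
  unfold gaussKernel
  rcases le_or_gt x 0 with hx | hx
  · rw [sqrt_eq_zero'.2 hx, sqrt_eq_zero'.2 (mul_nonpos_of_nonpos_of_nonneg hx hy)]
    simp
  have hx2 := sq_sqrt hx.le
  have hy2 := sq_sqrt hy
  have hplus : exp (-(x + y) / t) * exp (2 * √(x * y) / t) = exp (-(√x - √y) ^ 2 / t) := by
    rw [← exp_add, sqrt_mul hx.le]
    congr 1
    linear_combination (1 / t) * hx2 + (1 / t) * hy2
  have hminus : exp (-(x + y) / t) * exp (-(2 * √(x * y) / t)) = exp (-(√x - -√y) ^ 2 / t) := by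
    rw [← exp_add, sqrt_mul hx.le]
    congr 1
    linear_combination (1 / t) * hx2 + (1 / t) * hy2
  rw [sinh_eq, ← hplus, ← hminus]
  ring

section gaussKernel

variable {c t x : ℝ}

theorem hasDerivAt_gaussKernel_t (ht : 0 < t) (hx : 0 < x) :
    HasDerivAt (gaussKernel c · x)
      (gaussKernel c t x * (-1 / (2 * t) + (√x - c) ^ 2 / t ^ 2)) t := by
  have hA := (((hasDerivAt_id t).const_mul π).mul_const x).rpow_neg_half (by simp; positivity)
  have hE := ((hasDerivAt_inv ht.ne').const_mul (-(√x - c) ^ 2)).exp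
  refine (hA.mul hE).congr_deriv ?_
  unfold gaussKernel
  simp only [id, div_eq_mul_inv]
  field_simp

theorem hasDerivAt_gaussKernel_x (ht : 0 < t) (hx : 0 < x) :
    HasDerivAt (gaussKernel c t) (gaussKernel c t x * gaussKernelLogDerivX c t x) x := by
  have hA := ((hasDerivAt_id x).const_mul (π * t)).rpow_neg_half (by simp; positivity)
  have hE := ((((hasDerivAt_sqrt hx.ne').sub_const c).pow 2).neg.div_const t).exp
  refine (hA.mul hE).congr_deriv ?_
  unfold gaussKernel gaussKernelLogDerivX
  simp only [id, Pi.pow_apply, Pi.neg_apply]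
  field_simp
  norm_num
  ring

theorem hasDerivAt_gaussKernelLogDerivX (ht : t ≠ 0) (hx : 0 < x) :
    HasDerivAt (gaussKernelLogDerivX c t) (1 / (2 * x ^ 2) - c / (2 * t * x * √x)) x := by
  have hs : 0 < √x := sqrt_pos.2 hx
  have h1 := ((hasDerivAt_id x).const_mul 2).inv (by positivity)
  have h2 := ((hasDerivAt_sqrt hx.ne').const_mul t).inv (by positivity)
  refine ((h1.const_mul (-1)).sub_const (1 / t) |>.add (h2.const_mul c)).congr_deriv ?_
  simp only [id]
  field_simp
  linear_combination x * c * sq_sqrt hx.le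

theorem gaussKernel_logDeriv_identity (ht : t ≠ 0) (hx : 0 < x) :
    -1 / (2 * t) + (√x - c) ^ 2 / t ^ 2
      = x * (gaussKernelLogDerivX c t x ^ 2 + (1 / (2 * x ^ 2) - c / (2 * t * x * √x)))
        + 3 / 2 * gaussKernelLogDerivX c t x := by
  obtain ⟨r, hr, rfl⟩ : ∃ r, 0 < r ∧ x = r ^ 2 := ⟨√x, sqrt_pos.2 hx, (sq_sqrt hx.le).symm⟩
  unfold gaussKernelLogDerivX
  rw [sqrt_sq hr.le]
  field_simp
  ring

theorem solvesDriftDiffusionAt_gaussKernel (ht : 0 < t) (hx : 0 < x) :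
    SolvesDriftDiffusionAt (3/2) (gaussKernel c) t x := by
  refine ⟨fun x' => gaussKernel c t x' * gaussKernelLogDerivX c t x', _, _,
    hasDerivAt_gaussKernel_t ht hx,
    (eventually_gt_nhds hx).mono fun _ hx' => hasDerivAt_gaussKernel_x ht hx',
    (hasDerivAt_gaussKernel_x ht hx).mul (hasDerivAt_gaussKernelLogDerivX ht.ne' hx), ?_⟩
  linear_combination gaussKernel c t x * gaussKernel_logDeriv_identity (c := c) ht.ne' hx

end gaussKernel

/-- The fundamental-solution kernel for u_t = x u_xx + (3/2) u_x. -/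
theorem stmt_13 (y : ℝ) (hy : 0 < y) :
    ∀ t x : ℝ, 0 < t → 0 < x →
      let Kf : ℝ → ℝ → ℝ := fun t x =>
        (Real.pi * t * x) ^ (-(1:ℝ)/2) * Real.exp (-(x+y)/t)
          * Real.sinh (2 * Real.sqrt (x*y) / t)
      deriv (fun t' => Kf t' x) t
        = x * deriv (fun x' => deriv (fun x'' => Kf t x'') x') x
          + (3/2) * deriv (fun x' => Kf t x') x := by
  intro t x ht hx
  simp only [sinhKernel_eq_gaussKernel_sub hy.le]
  exact ((solvesDriftDiffusionAt_gaussKernel ht hx).sub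
    (solvesDriftDiffusionAt_gaussKernel ht hx)).div_const 2 |>.deriv_eq
end

section
/- Let b ≠ 1 and let u(t,x) solve u_t = x u_xx + b u_x. Then for each ε with 1 + εt > 0, the function ũ(t,x) = (1+εt)^{-b} exp(−εx/(1+εt)) · u(t/(1+εt), x/(1+εt)²) also solves the same equation. In particular, applying this to the stationary solution u = c₀ + c₁ x^{1−b} yields a solution for all t with 1+εt > 0, x > 0. -/
/-!
The transformation is the projective change of time `t ↦ t/(1+εt)`, the matching rescaling
`x ↦ x/(1+εt)²` of space, and the multiplier `(1+εt)^(-b) exp(-εx/(1+εt))`. By the chain rule,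
`ũ_t - x ũ_xx - b ũ_x` equals `(1+εt)^(-b-2) exp(-εx/(1+εt))` times `u_t - x u_xx - b u_x`
evaluated at the image point, so solutions go to solutions. The stationary solution
`c₀ + c₁ x^(1-b)` is then transformed into the stated one, because
`(1+εt)^(2(b-1)) x^(1-b) = (x/(1+εt)²)^(1-b)`.
-/

open Real Filter Topology

def IsSolutionAt (b : ℝ) (u : ℝ → ℝ → ℝ) (t x : ℝ) : Prop :=
  deriv (fun t' => u t' x) t
    = x * deriv (fun x' => deriv (fun x'' => u t x'') x') x + b * deriv (fun x' => u t x') x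

theorem IsSolutionAt.congr_of_eventuallyEq {b t x : ℝ} {v w : ℝ → ℝ → ℝ}
    (h : (fun p : ℝ × ℝ => v p.1 p.2) =ᶠ[𝓝 (t, x)] fun p => w p.1 p.2)
    (hv : IsSolutionAt b v t x) : IsSolutionAt b w t x := by
  have htime : (fun t' => v t' x) =ᶠ[𝓝 t] fun t' => w t' x :=
    h.comp_tendsto (g := fun t' => (t', x)) (Continuous.tendsto' (by fun_prop) t (t, x) rfl)
  have hspace : (fun x' => v t x') =ᶠ[𝓝 x] fun x' => w t x' :=
    h.comp_tendsto (g := fun x' => (t, x')) (Continuous.tendsto' (by fun_prop) x (t, x) rfl)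
  unfold IsSolutionAt at hv ⊢
  rwa [← htime.deriv_eq, ← hspace.deriv.deriv_eq, ← hspace.deriv_eq]

noncomputable def projectiveTransform (b ε : ℝ) (u : ℝ → ℝ → ℝ) (t x : ℝ) : ℝ :=
  (1 + ε*t) ^ (-b) * Real.exp (-(ε*x)/(1+ε*t)) * u (t/(1+ε*t)) (x/(1+ε*t)^2)

section Transform

variable {b ε t x : ℝ} {u : ℝ → ℝ → ℝ}

theorem hasDerivAt_projectiveTransform_time {L : ℝ × ℝ →L[ℝ] ℝ} (hs : 1 + ε*t ≠ 0)
    (hu : HasFDerivAt (fun p : ℝ × ℝ => u p.1 p.2) L (t/(1+ε*t), x/(1+ε*t)^2)) :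
    HasDerivAt (fun t' => projectiveTransform b ε u t' x)
      ((1+ε*t)^(-b) * exp (-(ε*x)/(1+ε*t))
        * ((-(b*ε)/(1+ε*t) + ε^2*x/(1+ε*t)^2) * u (t/(1+ε*t)) (x/(1+ε*t)^2)
          + (L (1, 0) - 2*ε*x/(1+ε*t) * L (0, 1)) / (1+ε*t)^2)) t := by
  have hs' : HasDerivAt (fun t' : ℝ => 1 + ε*t') ε t := by
    simpa using ((hasDerivAt_id t).const_mul ε).const_add 1
  have hA := hs'.rpow_const (p := -b) (Or.inl hs)
  have hE := ((hasDerivAt_const t (-(ε*x))).fun_div hs' hs).exp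
  have hτ := (hasDerivAt_id' t).fun_div hs' hs
  have hξ := (hasDerivAt_const t x).fun_div (hs'.fun_pow 2) (pow_ne_zero 2 hs)
  have hU := hu.comp_hasDerivAt t (hτ.prodMk hξ)
  have hL : ∀ a c : ℝ, L (a, c) = a * L (1, 0) + c * L (0, 1) := fun a c => by
    rw [← smul_eq_mul, ← smul_eq_mul, ← map_smul, ← map_smul, ← map_add]
    simp
  refine ((hA.mul hE).mul hU).congr_deriv ?_
  rw [hL, rpow_sub_one hs]
  simp only [Function.comp_apply, Pi.mul_apply]
  field_simp
  ring

theorem hasDerivAt_mul_exp_mul_comp_div_sq (A ε s : ℝ) {f : ℝ → ℝ} {f' y : ℝ}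
    (hf : HasDerivAt f f' (y/s^2)) :
    HasDerivAt (fun x' => A * exp (-(ε*x')/s) * f (x'/s^2))
      (A * exp (-(ε*y)/s) * (-(ε/s) * f (y/s^2) + f'/s^2)) y := by
  have hE := (((hasDerivAt_id' y).const_mul ε).neg.div_const s).exp
  have hf' := hf.comp y ((hasDerivAt_id' y).div_const (s^2))
  refine ((hE.const_mul A).mul hf').congr_deriv ?_
  simp only [Function.comp_apply, Pi.neg_apply]
  ring

theorem isSolutionAt_projectiveTransform (hs : 1 + ε*t ≠ 0)
    (hu : DifferentiableAt ℝ (fun p : ℝ × ℝ => u p.1 p.2) (t/(1+ε*t), x/(1+ε*t)^2))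
    (hux : ∀ᶠ q in 𝓝 (x/(1+ε*t)^2), DifferentiableAt ℝ (u (t/(1+ε*t))) q)
    (huxx : DifferentiableAt ℝ (deriv (u (t/(1+ε*t)))) (x/(1+ε*t)^2))
    (hpde : IsSolutionAt b u (t/(1+ε*t)) (x/(1+ε*t)^2)) :
    IsSolutionAt b (projectiveTransform b ε u) t x := by
  set s := 1 + ε*t
  set τ := t/s
  set ξ := x/s^2
  set g : ℝ → ℝ := fun q => -(ε/s) * u τ q + deriv (u τ) q / s^2
  set L := fderiv ℝ (fun p : ℝ × ℝ => u p.1 p.2) (τ, ξ)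
  have hut : HasDerivAt (fun t' => u t' ξ) (L (1, 0)) τ := by
    have h := hu.hasFDerivAt.comp_hasDerivAt τ ((hasDerivAt_id' τ).prodMk (hasDerivAt_const τ ξ))
    exact h
  have hux' : HasDerivAt (u τ) (L (0, 1)) ξ := by
    have h := hu.hasFDerivAt.comp_hasDerivAt ξ ((hasDerivAt_const ξ τ).prodMk (hasDerivAt_id' ξ))
    exact h
  have hfirst : ∀ᶠ x' in 𝓝 x, HasDerivAt (fun x'' => projectiveTransform b ε u t x'')
      (s^(-b) * exp (-(ε*x')/s) * g (x'/s^2)) x' := by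
    have hξ : Tendsto (fun x' => x'/s^2) (𝓝 x) (𝓝 ξ) := (continuous_id.div_const _).tendsto x
    filter_upwards [hξ.eventually hux] with x' hx'
    exact hasDerivAt_mul_exp_mul_comp_div_sq _ ε s hx'.hasDerivAt
  have hsecond : HasDerivAt (fun x' => s^(-b) * exp (-(ε*x')/s) * g (x'/s^2)) _ x :=
    hasDerivAt_mul_exp_mul_comp_div_sq (s^(-b)) ε s
      ((hux'.const_mul (-(ε/s))).fun_add (huxx.hasDerivAt.div_const (s^2)))
  have hxx : deriv (fun x' => deriv (fun x'' => projectiveTransform b ε u t x'') x') x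
      = deriv (fun x' => s^(-b) * exp (-(ε*x')/s) * g (x'/s^2)) x := by
    refine EventuallyEq.deriv_eq ?_
    filter_upwards [hfirst] with x' hx' using hx'.deriv
  unfold IsSolutionAt at hpde ⊢
  rw [(hasDerivAt_projectiveTransform_time hs hu.hasFDerivAt).deriv, hxx, hsecond.deriv,
    hfirst.self_of_nhds.deriv, ← hut.deriv, ← hux'.deriv, hpde]
  simp only [g, ξ, τ, s] at hs ⊢
  field_simp
  ring

theorem isSolutionAt_projectiveTransform_of_contDiff
    (hC : ContDiff ℝ 2 (fun p : ℝ × ℝ => u p.1 p.2)) (hs : 1 + ε*t ≠ 0)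
    (hu : IsSolutionAt b u (t/(1+ε*t)) (x/(1+ε*t)^2)) :
    IsSolutionAt b (projectiveTransform b ε u) t x := by
  have hslice : ContDiff ℝ (1 + 1) (u (t/(1+ε*t))) :=
    hC.comp (contDiff_const.prodMk contDiff_id)
  obtain ⟨hdiff, -, hderiv⟩ := contDiff_succ_iff_deriv.mp hslice
  exact isSolutionAt_projectiveTransform hs (hC.differentiable two_ne_zero _)
    (.of_forall hdiff) (hderiv.differentiable one_ne_zero _) hu

end Transform

noncomputable def stationarySolution (b c₀ c₁ : ℝ) (x : ℝ) : ℝ :=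
  c₀ + c₁ * x^(1-b)

section Stationary

variable {b c₀ c₁ q : ℝ}

theorem hasDerivAt_stationarySolution (hq : 0 < q) :
    HasDerivAt (stationarySolution b c₀ c₁) (c₁ * (1-b) * q^(-b)) q := by
  have h := ((hasDerivAt_rpow_const (p := 1-b) (Or.inl hq.ne')).const_mul c₁).const_add c₀
  rwa [sub_sub_cancel_left, ← mul_assoc] at h

theorem hasDerivAt_deriv_stationarySolution (hq : 0 < q) :
    HasDerivAt (deriv (stationarySolution b c₀ c₁)) (c₁ * (1-b) * (-b * q^(-b-1))) q := by
  refine ((hasDerivAt_rpow_const (Or.inl hq.ne')).const_mul _).congr_of_eventuallyEq ?_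
  filter_upwards [eventually_gt_nhds hq] with y hy using (hasDerivAt_stationarySolution hy).deriv

theorem isSolutionAt_stationarySolution {t x : ℝ} (hx : 0 < x) :
    IsSolutionAt b (fun _ => stationarySolution b c₀ c₁) t x := by
  unfold IsSolutionAt
  rw [deriv_const, (hasDerivAt_deriv_stationarySolution hx).deriv,
    (hasDerivAt_stationarySolution hx).deriv, rpow_sub_one hx.ne']
  field_simp
  ring

end Stationary

theorem rpow_two_mul_sub_one_mul_rpow {s y : ℝ} (b : ℝ) (hs : 0 < s) (hy : 0 ≤ y) :
    s^(2*(b-1)) * y^(1-b) = (y/s^2)^(1-b) := by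
  rw [div_rpow hy (sq_nonneg s), ← rpow_natCast_mul hs.le,
    show (2*(b-1) : ℝ) = -(2*(1-b)) by ring, rpow_neg hs.le]
  push_cast
  ring

theorem isSolutionAt_projectiveTransform_stationarySolution {b ε c₀ c₁ t x : ℝ}
    (hs : 0 < 1 + ε*t) (hx : 0 < x) :
    IsSolutionAt b (fun t x => (1 + ε*t) ^ (-b) * exp (-(ε*x)/(1+ε*t))
      * (c₀ + c₁ * (1+ε*t) ^ (2*(b-1)) * x ^ (1-b))) t x := by
  have hξ : 0 < x/(1+ε*t)^2 := by positivity
  have hφ := hasDerivAt_stationarySolution (b := b) (c₀ := c₀) (c₁ := c₁) hξ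
  refine (isSolutionAt_projectiveTransform hs.ne' ?_ ?_ ?_
    (isSolutionAt_stationarySolution (c₀ := c₀) (c₁ := c₁) hξ)).congr_of_eventuallyEq ?_
  · have h := hφ.differentiableAt.comp (t/(1+ε*t), x/(1+ε*t)^2)
      (differentiableAt_snd (𝕜 := ℝ) (E := ℝ) (F := ℝ))
    exact h
  · filter_upwards [eventually_gt_nhds hξ] with q hq
    exact (hasDerivAt_stationarySolution hq).differentiableAt
  · exact (hasDerivAt_deriv_stationarySolution hξ).differentiableAt
  · have hopen : IsOpen {p : ℝ × ℝ | 0 < 1 + ε*p.1 ∧ 0 < p.2} :=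
      (isOpen_lt continuous_const (by fun_prop : Continuous fun p : ℝ × ℝ => 1 + ε*p.1)).inter
        (isOpen_lt continuous_const continuous_snd)
    filter_upwards [hopen.mem_nhds ⟨hs, hx⟩] with p ⟨hp₁, hp₂⟩
    simp only [projectiveTransform, stationarySolution, mul_assoc,
      rpow_two_mul_sub_one_mul_rpow b hp₁ hp₂.le]

theorem stmt_14_general (b ε c₀ c₁ : ℝ) (u : ℝ → ℝ → ℝ)
    (hC : ContDiff ℝ 2 (fun p : ℝ × ℝ => u p.1 p.2))
    (hu : ∀ t x : ℝ,
      deriv (fun t' => u t' x) t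
        = x * deriv (fun x' => deriv (fun x'' => u t x'') x') x
          + b * deriv (fun x' => u t x') x) :
    (∀ t x : ℝ, 1 + ε*t > 0 →
      let v : ℝ → ℝ → ℝ := fun t x =>
        (1 + ε*t) ^ (-b) * Real.exp (-(ε*x)/(1+ε*t))
          * u (t/(1+ε*t)) (x/(1+ε*t)^2)
      deriv (fun t' => v t' x) t
        = x * deriv (fun x' => deriv (fun x'' => v t x'') x') x
          + b * deriv (fun x' => v t x') x) ∧
    (∀ t x : ℝ, 1 + ε*t > 0 → 0 < x →
      let w : ℝ → ℝ → ℝ := fun t x =>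
        (1 + ε*t) ^ (-b) * Real.exp (-(ε*x)/(1+ε*t))
          * (c₀ + c₁ * (1+ε*t) ^ (2*(b-1)) * x ^ (1-b))
      deriv (fun t' => w t' x) t
        = x * deriv (fun x' => deriv (fun x'' => w t x'') x') x
          + b * deriv (fun x' => w t x') x) :=
  ⟨fun _ _ hs => isSolutionAt_projectiveTransform_of_contDiff hC hs.ne' (hu _ _),
    fun _ _ hs hx => isSolutionAt_projectiveTransform_stationarySolution hs hx⟩

/-- The projective symmetry of u_t = x u_xx + b u_x maps solutions to
solutions, and applied to the stationary solution c₀ + c₁ x^{1−b} yields an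
explicit new solution. -/
theorem stmt_14 (b ε c₀ c₁ : ℝ) (hb : b ≠ 1) (u : ℝ → ℝ → ℝ)
    (hC : ContDiff ℝ 2 (fun p : ℝ × ℝ => u p.1 p.2))
    (hu : ∀ t x : ℝ,
      deriv (fun t' => u t' x) t
        = x * deriv (fun x' => deriv (fun x'' => u t x'') x') x
          + b * deriv (fun x' => u t x') x) :
    (∀ t x : ℝ, 1 + ε*t > 0 →
      let v : ℝ → ℝ → ℝ := fun t x =>
        (1 + ε*t) ^ (-b) * Real.exp (-(ε*x)/(1+ε*t))
          * u (t/(1+ε*t)) (x/(1+ε*t)^2)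
      deriv (fun t' => v t' x) t
        = x * deriv (fun x' => deriv (fun x'' => v t x'') x') x
          + b * deriv (fun x' => v t x') x) ∧
    (∀ t x : ℝ, 1 + ε*t > 0 → 0 < x →
      let w : ℝ → ℝ → ℝ := fun t x =>
        (1 + ε*t) ^ (-b) * Real.exp (-(ε*x)/(1+ε*t))
          * (c₀ + c₁ * (1+ε*t) ^ (2*(b-1)) * x ^ (1-b))
      deriv (fun t' => w t' x) t
        = x * deriv (fun x' => deriv (fun x'' => w t x'') x') x
          + b * deriv (fun x' => w t x') x) :=
  stmt_14_general b ε c₀ c₁ u hC hu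
end
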